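/- Along the iterates of the block-coordinate forward-backward algorithm, for every k it holds that φ_Γ(x^{k+1}) ≤ φ_Γ(x^k) − ∑_{i∈I^{k+1}} (ξ_i/(2γ_i))‖z_i^k − x_i^k‖², where ξ_i = (N − γ_i L_{f_i})/N > 0; in particular the FBE decreases surely at every iteration, regardless of which blocks are updated. -/

import Mathlib

open Filter Topology Metric Bornology Set
open scoped RealInnerProductSpace

noncomputable section

variable {N : ℕ} {E : Fin N → Type*}
  [∀ i, NormedAddCommGroup (E i)] [∀ i, InnerProductSpace ℝ (E i)]
  [∀ i, CompleteSpace (E i)]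

/-- `F(x) = (1/N) ∑ᵢ fᵢ(xᵢ)`, the smooth separable part of the cost. -/
def Fsum (f : ∀ i, E i → ℝ) (x : PiLp 2 E) : ℝ := (N : ℝ)⁻¹ * ∑ i, f i (x i)

/-- `Φ = F + G`, the total cost, extended-real-valued. -/
def Phi (f : ∀ i, E i → ℝ) (G : PiLp 2 E → EReal) (x : PiLp 2 E) : EReal :=
  ((Fsum f x : ℝ) : EReal) + G x

/-- The model `M(w,x) = F(x) + ⟨∇F(x),w-x⟩ + G(w) + ½‖w-x‖²_{Γ⁻¹}`, where `∇F(x)ᵢ = f'ᵢ(xᵢ)/N`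
and `Γ = blockdiag(γ₁ I, …, γ_N I)`. -/
def Mdl (f : ∀ i, E i → ℝ) (f' : ∀ i, E i → E i) (γ : Fin N → ℝ)
    (G : PiLp 2 E → EReal) (w x : PiLp 2 E) : EReal :=
  ((Fsum f x + (N : ℝ)⁻¹ * ∑ i, ⟪f' i (x i), w i - x i⟫
      + 2⁻¹ * ∑ i, (γ i)⁻¹ * ‖w i - x i‖ ^ 2 : ℝ) : EReal) + G w

/-- The forward-backward operator `T(x) = argmin_w M(w,x)`. -/
def Tmap (f : ∀ i, E i → ℝ) (f' : ∀ i, E i → E i) (γ : Fin N → ℝ)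
    (G : PiLp 2 E → EReal) (x : PiLp 2 E) : Set (PiLp 2 E) :=
  {z | ∀ w, Mdl f f' γ G z x ≤ Mdl f f' γ G w x}

/-- The `Γ⁻¹`-proximal mapping
`prox_G^{Γ⁻¹}(u) = argmin_w { G(w) + ½‖w-u‖²_{Γ⁻¹} }`. -/
def proxSet (γ : Fin N → ℝ) (G : PiLp 2 E → EReal) (u : PiLp 2 E) : Set (PiLp 2 E) :=
  {z | ∀ w, G z + ((2⁻¹ * ∑ i, (γ i)⁻¹ * ‖z i - u i‖ ^ 2 : ℝ) : EReal)
        ≤ G w + ((2⁻¹ * ∑ i, (γ i)⁻¹ * ‖w i - u i‖ ^ 2 : ℝ) : EReal)}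

/-- The forward (gradient) step `x - Γ∇F(x)`. -/
def fwd (f' : ∀ i, E i → E i) (γ : Fin N → ℝ) (x : PiLp 2 E) : PiLp 2 E :=
  WithLp.toLp 2 (fun i => x i - (γ i * (N : ℝ)⁻¹) • f' i (x i))

/-- Convexity for an extended-real-valued function. -/
def ERealConvex {X : Type*} [AddCommMonoid X] [Module ℝ X] (G : X → EReal) : Prop :=
  ∀ x y : X, ∀ a b : ℝ, 0 ≤ a → 0 ≤ b → a + b = 1 →
    G (a • x + b • y) ≤ (a : ℝ) * G x + (b : ℝ) * G y

/-- The regular (Fréchet) subdifferential `∂̂h(x)` of an extended-real-valued function. -/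
def frechetSubdiff {X : Type*} [NormedAddCommGroup X] [InnerProductSpace ℝ X]
    (h : X → EReal) (x : X) : Set X :=
  {v | h x ≠ ⊤ ∧ h x ≠ ⊥ ∧ ∀ ε : ℝ, 0 < ε →
      ∀ᶠ w in 𝓝 x, h x + ((⟪v, w - x⟫ - ε * ‖w - x‖ : ℝ) : EReal) ≤ h w}

/-- The limiting subdifferential `∂h(x)`. -/
def limitingSubdiff {X : Type*} [NormedAddCommGroup X] [InnerProductSpace ℝ X]
    (h : X → EReal) (x : X) : Set X :=
  {v | ∃ u w : ℕ → X, (∀ k, w k ∈ frechetSubdiff h (u k)) ∧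
      Tendsto u atTop (𝓝 x) ∧ Tendsto (fun k => h (u k)) atTop (𝓝 (h x)) ∧
      Tendsto w atTop (𝓝 v)}

/-- The Kurdyka-Łojasiewicz property with exponent `θ` (at every point of `dom ∂h`),
with desingularizing function `ψ(s) = ϱ s^{1-θ}`. -/
def HasKLExponent {X : Type*} [NormedAddCommGroup X] [InnerProductSpace ℝ X]
    (h : X → EReal) (θ : ℝ) : Prop :=
  ∀ xb : X, (limitingSubdiff h xb).Nonempty →
    ∃ ε η ϱ : ℝ, 0 < ε ∧ 0 < η ∧ 0 < ϱ ∧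
      ∀ w : X, ‖w - xb‖ < ε → h xb < h w → h w < h xb + ((η : ℝ) : EReal) →
        ∀ v ∈ limitingSubdiff h w,
          1 ≤ ϱ * (1 - θ) * (h w - h xb).toReal ^ (-θ) * ‖v‖

/-
The forward-backward envelope is the minimum over `w` of the model `M(w, x)`, so with
`z ∈ T(x)` one has `φ_Γ(x) = M(z, x)` and `φ_Γ(x⁺) ≤ M(z, x⁺)` for every `x⁺`. The model
`M(z, ·)` is separable across the blocks and `G(z)` cancels, so `φ_Γ(x⁺) - φ_Γ(x)` is bounded by
a sum of per-block differences. For a block that is not updated the difference vanishes; for an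
updated block, `x⁺ᵢ = zᵢ`, the descent lemma `fᵢ(zᵢ) ≤ fᵢ(xᵢ) + ⟪∇fᵢ(xᵢ), zᵢ - xᵢ⟫ + (Lᵢ/2)‖zᵢ - xᵢ‖²`
bounds it by `-(1/(2γᵢ) - Lᵢ/(2N))‖zᵢ - xᵢ‖² = -(ξᵢ/(2γᵢ))‖zᵢ - xᵢ‖²`.
-/

section DescentLemma

variable {X : Type*} [NormedAddCommGroup X] [InnerProductSpace ℝ X]
  {f : X → ℝ} {f' : X → X} {L : ℝ}

theorem hasDerivAt_comp_add_smul [CompleteSpace X] (hf : ∀ u, HasGradientAt f (f' u) u)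
    (u d : X) (t : ℝ) :
    HasDerivAt (fun s : ℝ => f (u + s • d)) ⟪f' (u + t • d), d⟫ t := by
  have hline : HasDerivAt (fun s : ℝ => u + s • d) d t := by
    simpa using ((hasDerivAt_id t).smul_const d).const_add u
  simpa [Function.comp_def] using
    (hasGradientAt_iff_hasFDerivAt.1 (hf (u + t • d))).comp_hasDerivAt t hline

theorem inner_gradient_add_smul_sub_le (hlip : ∀ u v, ‖f' u - f' v‖ ≤ L * ‖u - v‖)
    (u d : X) {t : ℝ} (ht : 0 ≤ t) :
    ⟪f' (u + t • d) - f' u, d⟫ ≤ t * L * ‖d‖ ^ 2 :=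
  calc ⟪f' (u + t • d) - f' u, d⟫ ≤ ‖f' (u + t • d) - f' u‖ * ‖d‖ := real_inner_le_norm _ _
    _ ≤ L * ‖t • d‖ * ‖d‖ := by
        gcongr
        simpa using hlip (u + t • d) u
    _ = t * L * ‖d‖ ^ 2 := by rw [norm_smul, Real.norm_of_nonneg ht]; ring

theorem le_add_inner_add_sq_of_lipschitz_gradient [CompleteSpace X]
    (hf : ∀ u, HasGradientAt f (f' u) u)
    (hlip : ∀ u v, ‖f' u - f' v‖ ≤ L * ‖u - v‖) (u v : X) :
    f v ≤ f u + ⟪f' u, v - u⟫ + L / 2 * ‖v - u‖ ^ 2 := by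
  set d := v - u
  let h : ℝ → ℝ := fun t => f (u + t • d) - t * ⟪f' u, d⟫ - t ^ 2 * (L / 2 * ‖d‖ ^ 2)
  have hderiv : ∀ t, HasDerivAt h (⟪f' (u + t • d), d⟫ - ⟪f' u, d⟫ - t * (L * ‖d‖ ^ 2)) t := by
    intro t
    have := ((hasDerivAt_comp_add_smul hf u d t).sub ((hasDerivAt_id t).mul_const ⟪f' u, d⟫)).sub
      ((hasDerivAt_pow 2 t).mul_const (L / 2 * ‖d‖ ^ 2))
    exact this.congr_deriv (by norm_num; ring)
  have hanti : AntitoneOn h (Icc 0 1) := by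
    refine antitoneOn_of_hasDerivWithinAt_nonpos (convex_Icc 0 1)
      (fun t _ => (hderiv t).continuousAt.continuousWithinAt)
      (fun t _ => (hderiv t).hasDerivWithinAt) fun t ht => ?_
    rw [interior_Icc] at ht
    have := inner_gradient_add_smul_sub_le hlip u d ht.1.le
    rw [inner_sub_left] at this
    linarith
  have h10 : h 1 ≤ h 0 := hanti (by simp) (by simp) zero_le_one
  simp only [h, one_smul, zero_smul, add_zero, one_mul, zero_mul, one_pow, sub_zero,
    add_sub_cancel, d] at h10
  linarith

end DescentLemma

theorem EReal.eq_coe_sub_of_coe_eq_coe_add {r a : ℝ} {g : EReal} (h : (r : EReal) = a + g) :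
    g = ((r - a : ℝ) : EReal) := by
  induction g using EReal.rec with
  | bot => simp at h
  | top => simp at h
  | coe g =>
    rw [← EReal.coe_add, EReal.coe_eq_coe_iff] at h
    simp [h]

def blockModel (f : ∀ i, E i → ℝ) (f' : ∀ i, E i → E i) (γ : Fin N → ℝ) (i : Fin N)
    (v u : E i) : ℝ :=
  (N : ℝ)⁻¹ * f i u + (N : ℝ)⁻¹ * ⟪f' i u, v - u⟫ + 2⁻¹ * ((γ i)⁻¹ * ‖v - u‖ ^ 2)

omit [∀ i, CompleteSpace (E i)] in
theorem Mdl_eq_sum_blockModel (f : ∀ i, E i → ℝ) (f' : ∀ i, E i → E i) (γ : Fin N → ℝ)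
    (G : PiLp 2 E → EReal) (z w : PiLp 2 E) :
    Mdl f f' γ G z w = ((∑ i, blockModel f f' γ i (z i) (w i) : ℝ) : EReal) + G z := by
  simp only [Mdl, Fsum, blockModel, Finset.mul_sum, Finset.sum_add_distrib]

theorem blockModel_self_le (f : ∀ i, E i → ℝ) (f' : ∀ i, E i → E i) {L γ : Fin N → ℝ}
    {i : Fin N} (hf : ∀ u, HasGradientAt (f i) (f' i u) u)
    (hlip : ∀ u v, ‖f' i u - f' i v‖ ≤ L i * ‖u - v‖) (hγ : γ i ≠ 0) (u v : E i) :
    blockModel f f' γ i v v ≤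
      blockModel f f' γ i v u - ((N - γ i * L i) / N) / (2 * γ i) * ‖v - u‖ ^ 2 := by
  have hN : (N : ℝ) ≠ 0 := by exact_mod_cast i.pos.ne'
  have hdesc := le_add_inner_add_sq_of_lipschitz_gradient hf hlip u v
  have hcoeff : ((N - γ i * L i) / N) / (2 * γ i) = 2⁻¹ * (γ i)⁻¹ - L i / 2 * (N : ℝ)⁻¹ := by
    field_simp
  have hscaled := mul_le_mul_of_nonneg_left hdesc (inv_nonneg.2 (Nat.cast_nonneg N))
  rw [blockModel, blockModel, hcoeff]
  simp only [sub_self, inner_zero_right, norm_zero]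
  linarith

theorem sum_blockModel_update_sub_le (f : ∀ i, E i → ℝ) (f' : ∀ i, E i → E i)
    {L γ : Fin N → ℝ} (hf : ∀ i u, HasGradientAt (f i) (f' i u) u)
    (hlip : ∀ i u v, ‖f' i u - f' i v‖ ≤ L i * ‖u - v‖) (hγ : ∀ i, γ i ≠ 0)
    {x x' z : PiLp 2 E} {I : Finset (Fin N)}
    (hup : ∀ i, x' i = if i ∈ I then z i else x i) :
    ∑ i, (blockModel f f' γ i (z i) (x' i) - blockModel f f' γ i (z i) (x i)) ≤
      -∑ i ∈ I, ((N - γ i * L i) / N) / (2 * γ i) * ‖z i - x i‖ ^ 2 := by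
  rw [← Finset.sum_subset (Finset.subset_univ I) fun i _ hi => by simp [hup i, hi],
    ← Finset.sum_neg_distrib]
  refine Finset.sum_le_sum fun i hi => ?_
  have := blockModel_self_le f f' (hf i) (hlip i) (hγ i) (x i) (z i)
  rw [hup i, if_pos hi]
  linarith

omit [∀ i, CompleteSpace (E i)] in
theorem fbe_sub_le_sum_blockModel_sub {f : ∀ i, E i → ℝ} {f' : ∀ i, E i → E i}
    {γ : Fin N → ℝ} {G : PiLp 2 E → EReal} {φ : PiLp 2 E → ℝ}
    (hφ : ∀ x, ((φ x : ℝ) : EReal) = ⨅ w, Mdl f f' γ G w x) {x z : PiLp 2 E}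
    (hz : z ∈ Tmap f f' γ G x) (x' : PiLp 2 E) :
    φ x' - φ x ≤ ∑ i, (blockModel f f' γ i (z i) (x' i) - blockModel f f' γ i (z i) (x i)) := by
  have hx : ((φ x : ℝ) : EReal) = Mdl f f' γ G z x := by
    rw [hφ]
    exact le_antisymm (iInf_le _ z) (le_iInf hz)
  have hx' : ((φ x' : ℝ) : EReal) ≤ Mdl f f' γ G z x' := by
    rw [hφ]
    exact iInf_le _ z
  rw [Mdl_eq_sum_blockModel] at hx hx'
  rw [EReal.eq_coe_sub_of_coe_eq_coe_add hx, ← EReal.coe_add, EReal.coe_le_coe_iff] at hx'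
  rw [Finset.sum_sub_distrib]
  linarith

theorem bc_sure_descent_fbe_general
    (f : ∀ i, E i → ℝ) (f' : ∀ i, E i → E i) (L γ : Fin N → ℝ)
    (G : PiLp 2 E → EReal)
    (hf : ∀ i (u : E i), HasGradientAt (f i) (f' i u) u)
    (hlip : ∀ i (u v : E i), ‖f' i u - f' i v‖ ≤ L i * ‖u - v‖)
    (hγ : ∀ i, 0 < γ i) (hγL : ∀ i, γ i * L i < (N : ℝ))
    (φ : PiLp 2 E → ℝ)
    (hφ : ∀ x, ((φ x : ℝ) : EReal) = ⨅ w, Mdl f f' γ G w x)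
    (x z : ℕ → PiLp 2 E) (I : ℕ → Finset (Fin N))
    (hz : ∀ k, z k ∈ Tmap f f' γ G (x k))
    (hup : ∀ (k : ℕ) (i : Fin N), x (k + 1) i = if i ∈ I (k + 1) then z k i else x k i)
    :
    (∀ i, 0 < ((N : ℝ) - γ i * L i) / (N : ℝ)) ∧
    ∀ k : ℕ, φ (x (k + 1)) ≤ φ (x k)
        - ∑ i ∈ I (k + 1), (((N : ℝ) - γ i * L i) / (N : ℝ)) / (2 * γ i) * ‖z k i - x k i‖ ^ 2 := by
  refine ⟨fun i => div_pos (sub_pos.2 (hγL i)) (by exact_mod_cast i.pos), fun k => ?_⟩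
  have hφ_sub := fbe_sub_le_sum_blockModel_sub hφ (hz k) (x (k + 1))
  have hblocks := sum_blockModel_update_sub_le f f' hf hlip (fun i => (hγ i).ne') (hup k)
  linarith

/-- Lemma 3.2(i), sure descent: along the iterates of the BC
forward-backward algorithm, φ_Γ(x^{k+1}) ≤ φ_Γ(x^k) - ∑_{i∈I^{k+1}} (ξᵢ/(2γᵢ))‖zᵢ^k-xᵢ^k‖²,
where ξᵢ = (N - γᵢ L_{f_i})/N are strictly positive. -/
theorem bc_sure_descent_fbe
    (f : ∀ i, E i → ℝ) (f' : ∀ i, E i → E i) (L γ : Fin N → ℝ)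
    (G : PiLp 2 E → EReal)
    (hf : ∀ i (u : E i), HasGradientAt (f i) (f' i u) u)
    (hL : ∀ i, 0 ≤ L i)
    (hlip : ∀ i (u v : E i), ‖f' i u - f' i v‖ ≤ L i * ‖u - v‖)
    (hγ : ∀ i, 0 < γ i) (hγL : ∀ i, γ i * L i < (N : ℝ))
    (hGlsc : LowerSemicontinuous G)
    (hGproper : ∃ w, G w ≠ ⊤) (hGbot : ∀ w, G w ≠ ⊥)
    (hargmin : ∃ xs : PiLp 2 E, ∀ w, Phi f G xs ≤ Phi f G w)
    (φ : PiLp 2 E → ℝ)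
    (hφ : ∀ x, ((φ x : ℝ) : EReal) = ⨅ w, Mdl f f' γ G w x)
    (x z : ℕ → PiLp 2 E) (I : ℕ → Finset (Fin N))
    (hz : ∀ k, z k ∈ Tmap f f' γ G (x k))
    (hup : ∀ (k : ℕ) (i : Fin N), x (k + 1) i = if i ∈ I (k + 1) then z k i else x k i)
    :
    (∀ i, 0 < ((N : ℝ) - γ i * L i) / (N : ℝ)) ∧
    ∀ k : ℕ, φ (x (k + 1)) ≤ φ (x k)
        - ∑ i ∈ I (k + 1), (((N : ℝ) - γ i * L i) / (N : ℝ)) / (2 * γ i) * ‖z k i - x k i‖ ^ 2 :=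
  bc_sure_descent_fbe_general f f' L γ G hf hlip hγ hγL φ hφ x z I hz hup
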